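/- arXiv:2001.04920 — 2 statements merged into one kernel-verified Lean document; each statement's English description precedes it below -/
import Mathlib

section
/- Let t₀ > 0 be the unique positive solution of cosh(t) = t·sinh(t). If 0 < h < r/sinh(t₀), then the equation rs = cosh(sh) has exactly two positive solutions s₁ < s₂. -/
/-!
The function `φ s = cosh (s h) - r s` is strictly convex, so it has at most two zeros, and it has
exactly two as soon as it takes a negative value between two positive ones. It is positive at
`0` and for large `s` (cosh grows quadratically), while at `s = t₀ / h` the relation
`cosh t₀ = t₀ sinh t₀` gives `φ (t₀ / h) = t₀ (sinh t₀ - r / h)`, which is negative exactly when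
`h < r / sinh t₀`.
-/

open Real Set

theorem strictConvexOn_cosh : StrictConvexOn ℝ univ cosh := by
  refine strictConvexOn_of_deriv2_pos' convex_univ continuous_cosh.continuousOn fun x _ ↦ ?_
  have hderiv2 : deriv^[2] cosh = cosh := by
    ext y
    simp [Function.iterate_succ, Real.deriv_cosh, Real.deriv_sinh]
  rw [hderiv2]
  exact cosh_pos x

theorem StrictConvexOn.comp_mul_const {f : ℝ → ℝ} (hf : StrictConvexOn ℝ univ f) {c : ℝ}
    (hc : c ≠ 0) : StrictConvexOn ℝ univ fun x ↦ f (x * c) := by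
  refine ⟨convex_univ, fun x _ y _ hxy a b ha hb hab ↦ ?_⟩
  simpa [smul_eq_mul, add_mul, mul_assoc] using
    hf.2 trivial trivial ((mul_left_injective₀ hc).ne hxy) ha hb hab

theorem strictConvexOn_cosh_mul_sub_mul (r : ℝ) {h : ℝ} (hh : h ≠ 0) :
    StrictConvexOn ℝ univ fun s ↦ cosh (s * h) - r * s :=
  (strictConvexOn_cosh.comp_mul_const hh).sub_concaveOn
    ((LinearMap.mulLeft ℝ r).concaveOn convex_univ)

theorem StrictConvexOn.map_lt_max_of_lt_of_lt {s : Set ℝ} {f : ℝ → ℝ}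
    (hf : StrictConvexOn ℝ s f) {x y z : ℝ} (hx : x ∈ s) (hz : z ∈ s) (hxy : x < y)
    (hyz : y < z) : f y < max (f x) (f z) :=
  hf.lt_on_openSegment hx hz (hxy.trans hyz).ne <| by
    rw [openSegment_eq_Ioo (hxy.trans hyz)]
    exact ⟨hxy, hyz⟩

theorem StrictConvexOn.eq_or_eq_of_map_eq_zero {s : Set ℝ} {f : ℝ → ℝ}
    (hf : StrictConvexOn ℝ s f) {x₁ x₂ x : ℝ} (hx₁ : x₁ ∈ s) (hx₂ : x₂ ∈ s) (hx : x ∈ s)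
    (h₁₂ : x₁ < x₂) (hf₁ : f x₁ = 0) (hf₂ : f x₂ = 0) (hfx : f x = 0) : x = x₁ ∨ x = x₂ := by
  rcases lt_trichotomy x x₁ with hlt₁ | rfl | hgt₁
  · simpa [hf₁, hf₂, hfx] using hf.map_lt_max_of_lt_of_lt hx hx₂ hlt₁ h₁₂
  · exact .inl rfl
  rcases lt_trichotomy x x₂ with hlt₂ | rfl | hgt₂
  · simpa [hf₁, hf₂, hfx] using hf.map_lt_max_of_lt_of_lt hx₁ hx₂ hgt₁ hlt₂
  · exact .inr rfl
  · simpa [hf₁, hf₂, hfx] using hf.map_lt_max_of_lt_of_lt hx₁ hx h₁₂ hgt₂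

theorem StrictConvexOn.exists_two_zeros {s : Set ℝ} {f : ℝ → ℝ} (hf : StrictConvexOn ℝ s f)
    (hcont : ContinuousOn f s) {a b c : ℝ} (ha : a ∈ s) (hc : c ∈ s) (hab : a < b) (hbc : b < c)
    (hfa : 0 < f a) (hfb : f b < 0) (hfc : 0 < f c) :
    ∃ x₁ x₂, a < x₁ ∧ x₁ < x₂ ∧ f x₁ = 0 ∧ f x₂ = 0 ∧ ∀ x ∈ s, f x = 0 → x = x₁ ∨ x = x₂ := by
  have hac : Icc a c ⊆ s := hf.1.ordConnected.out ha hc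
  obtain ⟨x₁, ⟨hax₁, hx₁b⟩, hf₁⟩ : 0 ∈ f '' Ioo a b :=
    intermediate_value_Ioo' hab.le (hcont.mono ((Icc_subset_Icc_right hbc.le).trans hac))
      ⟨hfb, hfa⟩
  obtain ⟨x₂, ⟨hbx₂, hx₂c⟩, hf₂⟩ : 0 ∈ f '' Ioo b c :=
    intermediate_value_Ioo hbc.le (hcont.mono ((Icc_subset_Icc_left hab.le).trans hac))
      ⟨hfb, hfc⟩
  refine ⟨x₁, x₂, hax₁, hx₁b.trans hbx₂, hf₁, hf₂, fun x hx hfx ↦ ?_⟩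
  exact hf.eq_or_eq_of_map_eq_zero (hac ⟨hax₁.le, (hx₁b.trans hbc).le⟩)
    (hac ⟨(hab.trans hbx₂).le, hx₂c.le⟩) hx (hx₁b.trans hbx₂) hf₁ hf₂ hfx

theorem one_add_sq_div_four_le_cosh {x : ℝ} (hx : 0 ≤ x) : 1 + x ^ 2 / 4 ≤ cosh x := by
  rw [cosh_eq]
  nlinarith [quadratic_le_exp_of_nonneg hx, add_one_le_exp (-x)]

theorem mul_lt_cosh_mul {r h s : ℝ} (hs : 0 ≤ s) (hrs : 4 * r ≤ s * h ^ 2) :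
    r * s < cosh (s * h) := by
  have hcosh := one_add_sq_div_four_le_cosh (abs_nonneg (s * h))
  rw [cosh_abs, sq_abs] at hcosh
  nlinarith

theorem stmt1_general (r h t₀ : ℝ) (hr : 0 < r) (hh : 0 < h) (ht₀ : 0 < t₀)
    (ht₀eq : Real.cosh t₀ = t₀ * Real.sinh t₀)
    (hsmall : h < r / Real.sinh t₀) :
    ∃ s₁ s₂ : ℝ, 0 < s₁ ∧ s₁ < s₂ ∧
      r * s₁ = Real.cosh (s₁ * h) ∧ r * s₂ = Real.cosh (s₂ * h) ∧
      ∀ s, 0 < s → r * s = Real.cosh (s * h) → s = s₁ ∨ s = s₂ := by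
  have hsinh_lt : sinh t₀ < r / h := by
    rw [lt_div_iff₀ hh]
    exact (lt_div_iff₀' (sinh_pos_iff.mpr ht₀)).1 hsmall
  have hneg : cosh (t₀ / h * h) - r * (t₀ / h) < 0 := by
    rw [div_mul_cancel₀ _ hh.ne', ht₀eq, sub_neg, mul_div_left_comm]
    exact mul_lt_mul_of_pos_left hsinh_lt ht₀
  set S := t₀ / h + 4 * r / h ^ 2
  have hS : S * h ^ 2 = t₀ * h + 4 * r := by
    simp only [S]
    field_simp
  have hpos : 0 < cosh (S * h) - r * S :=
    sub_pos.2 (mul_lt_cosh_mul (by positivity) (by rw [hS]; linarith [mul_pos ht₀ hh]))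
  obtain ⟨s₁, s₂, hs₁, h₁₂, hz₁, hz₂, huniq⟩ :=
    (strictConvexOn_cosh_mul_sub_mul r hh.ne').exists_two_zeros
      (by fun_prop : Continuous fun s ↦ cosh (s * h) - r * s).continuousOn (mem_univ 0)
      (mem_univ S) (div_pos ht₀ hh) (lt_add_of_pos_right _ (by positivity)) (by simp) hneg hpos
  refine ⟨s₁, s₂, hs₁, h₁₂, (sub_eq_zero.1 hz₁).symm, (sub_eq_zero.1 hz₂).symm,
    fun s _ hs ↦ huniq s trivial ?_⟩
  simp [← hs]

/-- If `t₀` is the unique positive solution of `cosh t = t·sinh t` and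
`0 < h < r / sinh t₀`, then `rs = cosh(sh)` has exactly two positive solutions `s₁ < s₂`. -/
theorem stmt1 (r h t₀ : ℝ) (hr : 0 < r) (hh : 0 < h) (ht₀ : 0 < t₀)
    (ht₀eq : Real.cosh t₀ = t₀ * Real.sinh t₀)
    (ht₀uniq : ∀ t, 0 < t → Real.cosh t = t * Real.sinh t → t = t₀)
    (hsmall : h < r / Real.sinh t₀) :
    ∃ s₁ s₂ : ℝ, 0 < s₁ ∧ s₁ < s₂ ∧
      r * s₁ = Real.cosh (s₁ * h) ∧ r * s₂ = Real.cosh (s₂ * h) ∧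
      ∀ s, 0 < s → r * s = Real.cosh (s * h) → s = s₁ ∨ s = s₂ :=
  stmt1_general r h t₀ hr hh ht₀ ht₀eq hsmall
end

section
/- Let r, h > 0 with 2h < r·tanh(1), and let s₂ > 0 satisfy rs₂ = cosh(s₂h) and s₂h > 1. Then the area A(s₂) = (2π/s₂²)(s₂h + rs₂·tanh(s₂h)·cosh(s₂h)) of the unstable catenoid satisfies A(s₂) > 4πrh, i.e., it exceeds the area of the cylinder of radius r and height 2h. -/
open Real

theorem tanh_strictMono : StrictMono tanh := fun a b hab => by
  by_contra! hba
  have := artanh_le_artanh (neg_one_lt_tanh b) (tanh_lt_one a) hba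
  rw [artanh_tanh, artanh_tanh] at this
  exact this.not_gt hab

/-- On the catenoid branch `r s = cosh (s h)` the area collapses, since `cosh (s h) / s = r`. -/
theorem catenoid_area_eq_of_mul_eq_cosh {r h s : ℝ} (hs : s ≠ 0) (heq : r * s = cosh (s * h)) :
    (2 * π / s ^ 2) * (s * h + r * s * tanh (s * h) * cosh (s * h))
      = 2 * π * h / s + 2 * π * r ^ 2 * tanh (s * h) := by
  rw [← heq]
  field_simp

theorem stmt5_general (r h s₂ : ℝ) (hr : 0 < r) (hrh : 2 * h < r * Real.tanh 1)
    (heq : r * s₂ = Real.cosh (s₂ * h)) (hgt : 1 < s₂ * h) :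
    4 * π * r * h
      < (2 * π / s₂ ^ 2) * (s₂ * h + r * s₂ * Real.tanh (s₂ * h) * Real.cosh (s₂ * h)) := by
  have hs₂ : s₂ ≠ 0 := by rintro rfl; norm_num at hgt
  have hh_div : 0 < h / s₂ := by
    rw [show h / s₂ = s₂ * h / s₂ ^ 2 by field_simp]
    exact div_pos (by linarith) (by positivity)
  have htanh : tanh 1 < tanh (s₂ * h) := tanh_strictMono hgt
  rw [catenoid_area_eq_of_mul_eq_cosh hs₂ heq]
  calc 4 * π * r * h = 2 * π * r * (2 * h) := by ring
    _ < 2 * π * r * (r * tanh 1) := by gcongr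
    _ < 2 * π * r * (r * tanh (s₂ * h)) := by gcongr
    _ < 2 * π * (h / s₂) + 2 * π * r * (r * tanh (s₂ * h)) :=
      lt_add_of_pos_left _ (mul_pos (by positivity) hh_div)
    _ = 2 * π * h / s₂ + 2 * π * r ^ 2 * tanh (s₂ * h) := by ring

/-- If `2h < r·tanh 1` and `s₂ > 0` satisfies `r·s₂ = cosh(s₂h)` and `s₂h > 1`,
then the area `A(s₂) = (2π/s₂²)(s₂h + rs₂·tanh(s₂h)·cosh(s₂h))` of the unstable catenoid
exceeds the area `4πrh` of the cylinder. -/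
theorem stmt5 (r h s₂ : ℝ) (hr : 0 < r) (hh : 0 < h) (hrh : 2 * h < r * Real.tanh 1)
    (hs₂ : 0 < s₂) (heq : r * s₂ = Real.cosh (s₂ * h)) (hgt : 1 < s₂ * h) :
    4 * π * r * h
      < (2 * π / s₂ ^ 2) * (s₂ * h + r * s₂ * Real.tanh (s₂ * h) * Real.cosh (s₂ * h)) :=
  stmt5_general r h s₂ hr hrh heq hgt
end
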